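/- arXiv:1809.08149 — 7 statements merged into one kernel-verified Lean document; each statement's English description precedes it below -/
import Mathlib

section
/- On the Lie algebra rh3 with complex structure Je1=e2, Je2=-e1, Je3=e4, Je4=-e3, for every σ>0 the pair θ = -e^4, Ω = σ(e^{12}+e^{34}) is a locally conformally Kähler structure: dθ=0, dΩ = θ∧Ω, Ω is J-invariant, and Ω(x,Jx)>0 for all nonzero x. -/
/-!
In the coordinates `xᵢ = b.repr x i`, the bracket of `rh3` is `⁅x, y⁆ = (x₀y₁ - x₁y₀) • b 2`,
`θ x = -x₃`, `Ω x y = σ (x₀y₁ - x₁y₀ + x₂y₃ - x₃y₂)` and `J` acts by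
`(x₀, x₁, x₂, x₃) ↦ (-x₁, x₀, -x₃, x₂)`. Every lcK condition thereby becomes a polynomial identity
in the coordinates, and `Ω x (J x) = σ ∑ xᵢ²`.
-/

open Module

section Coordinates

variable {R M N : Type*} [CommRing R] [AddCommGroup M] [Module R M] [AddCommGroup N] [Module R N]

theorem Module.Basis.apply_eq_sum_repr {ι : Type*} [Fintype ι] (b : Basis ι R M) (f : M →ₗ[R] N)
    (x : M) : f x = ∑ i, b.repr x i • f (b i) := by
  conv_lhs => rw [← b.sum_repr x]
  simp only [map_sum, map_smul]

theorem Module.Basis.apply₂_eq_sum_repr {ι : Type*} [Fintype ι] (b : Basis ι R M)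
    (B : M →ₗ[R] M →ₗ[R] N) (x y : M) :
    B x y = ∑ i, ∑ j, b.repr x i • b.repr y j • B (b i) (b j) := by
  rw [← LinearMap.sum_repr_mul_repr_mul b b x y (B := B)]
  simp [Finsupp.sum_fintype]

theorem LinearMap.IsAlt.apply_eq_fin_four (b : Basis (Fin 4) R M) {B : M →ₗ[R] M →ₗ[R] N}
    (hB : B.IsAlt) (x y : M) :
    B x y = (b.repr x 0 * b.repr y 1 - b.repr x 1 * b.repr y 0) • B (b 0) (b 1)
      + (b.repr x 0 * b.repr y 2 - b.repr x 2 * b.repr y 0) • B (b 0) (b 2)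
      + (b.repr x 0 * b.repr y 3 - b.repr x 3 * b.repr y 0) • B (b 0) (b 3)
      + (b.repr x 1 * b.repr y 2 - b.repr x 2 * b.repr y 1) • B (b 1) (b 2)
      + (b.repr x 1 * b.repr y 3 - b.repr x 3 * b.repr y 1) • B (b 1) (b 3)
      + (b.repr x 2 * b.repr y 3 - b.repr x 3 * b.repr y 2) • B (b 2) (b 3) := by
  simp only [b.apply₂_eq_sum_repr B x y, Fin.sum_univ_four, hB.self_eq_zero,
    ← hB.neg (b 0) (b 1), ← hB.neg (b 0) (b 2), ← hB.neg (b 0) (b 3), ← hB.neg (b 1) (b 2),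
    ← hB.neg (b 1) (b 3), ← hB.neg (b 2) (b 3)]
  module

theorem LinearMap.IsAlt.apply_eq_mul_e12_add_e34 (b : Basis (Fin 4) R M)
    {Ω : M →ₗ[R] M →ₗ[R] R} (hΩ : Ω.IsAlt) {σ : R}
    (hΩ01 : Ω (b 0) (b 1) = σ) (hΩ02 : Ω (b 0) (b 2) = 0) (hΩ03 : Ω (b 0) (b 3) = 0)
    (hΩ12 : Ω (b 1) (b 2) = 0) (hΩ13 : Ω (b 1) (b 3) = 0) (hΩ23 : Ω (b 2) (b 3) = σ) (x y : M) :
    Ω x y = σ * (b.repr x 0 * b.repr y 1 - b.repr x 1 * b.repr y 0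
      + (b.repr x 2 * b.repr y 3 - b.repr x 3 * b.repr y 2)) := by
  rw [hΩ.apply_eq_fin_four b x y, hΩ01, hΩ02, hΩ03, hΩ12, hΩ13, hΩ23]
  simp only [smul_eq_mul, mul_zero, add_zero]
  ring

theorem Module.Basis.repr_apply_of_complexStructure (b : Basis (Fin 4) R M) {J : M →ₗ[R] M}
    (hJ0 : J (b 0) = b 1) (hJ1 : J (b 1) = -(b 0)) (hJ2 : J (b 2) = b 3) (hJ3 : J (b 3) = -(b 2))
    (x : M) (i : Fin 4) :
    b.repr (J x) i = ![-b.repr x 1, b.repr x 0, -b.repr x 3, b.repr x 2] i := by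
  rw [b.apply_eq_sum_repr J x]
  fin_cases i <;> simp [Fin.sum_univ_four, hJ0, hJ1, hJ2, hJ3]

end Coordinates

theorem Module.Basis.sum_sq_repr_pos {K M ι : Type*} [Field K] [LinearOrder K]
    [IsStrictOrderedRing K] [AddCommGroup M] [Module K M] [Fintype ι] (b : Basis ι K M) {x : M}
    (hx : x ≠ 0) :
    0 < ∑ i, b.repr x i ^ 2 := by
  obtain ⟨i, hi⟩ : ∃ i, b.repr x i ≠ 0 := by
    by_contra! h
    exact hx (b.ext_elem fun i => by simpa using h i)
  exact Finset.sum_pos' (fun j _ => sq_nonneg _) ⟨i, Finset.mem_univ _, by positivity⟩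

theorem Module.Basis.lie_eq_of_rh3 {R L : Type*} [CommRing R] [LieRing L] [LieAlgebra R L]
    (b : Basis (Fin 4) R L)
    (h01 : ⁅b 0, b 1⁆ = b 2) (h02 : ⁅b 0, b 2⁆ = 0) (h03 : ⁅b 0, b 3⁆ = 0)
    (h12 : ⁅b 1, b 2⁆ = 0) (h13 : ⁅b 1, b 3⁆ = 0) (h23 : ⁅b 2, b 3⁆ = 0) (x y : L) :
    ⁅x, y⁆ = (b.repr x 0 * b.repr y 1 - b.repr x 1 * b.repr y 0) • b 2 := by
  have hAlt : (LieModule.toEnd R L L : L →ₗ[R] L →ₗ[R] L).IsAlt := fun x => by simp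
  simpa [h01, h02, h03, h12, h13, h23] using hAlt.apply_eq_fin_four b x y

/-- On `rh3` with complex structure `Je1=e2, Je2=-e1, Je3=e4, Je4=-e3`, for every
`σ > 0` the pair `θ = -e⁴`, `Ω = σ(e¹² + e³⁴)` is an lcK structure: `dθ = 0`,
`dΩ = θ ∧ Ω`, `Ω` is `J`-invariant, and `Ω(x, Jx) > 0` for all nonzero `x`. -/
theorem stmt4 (L : Type*) [LieRing L] [LieAlgebra ℝ L]
    (b : Module.Basis (Fin 4) ℝ L)
    (h01 : ⁅b 0, b 1⁆ = b 2) (h02 : ⁅b 0, b 2⁆ = 0) (h03 : ⁅b 0, b 3⁆ = 0)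
    (h12 : ⁅b 1, b 2⁆ = 0) (h13 : ⁅b 1, b 3⁆ = 0) (h23 : ⁅b 2, b 3⁆ = 0)
    (J : L →ₗ[ℝ] L)
    (hJ0 : J (b 0) = b 1) (hJ1 : J (b 1) = -(b 0))
    (hJ2 : J (b 2) = b 3) (hJ3 : J (b 3) = -(b 2))
    (σ : ℝ) (hσ : 0 < σ)
    (θ : L →ₗ[ℝ] ℝ)
    (hθ0 : θ (b 0) = 0) (hθ1 : θ (b 1) = 0) (hθ2 : θ (b 2) = 0) (hθ3 : θ (b 3) = -1)
    (Ω : L →ₗ[ℝ] L →ₗ[ℝ] ℝ) (halt : ∀ x y : L, Ω x y = - Ω y x)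
    (hΩ01 : Ω (b 0) (b 1) = σ) (hΩ02 : Ω (b 0) (b 2) = 0) (hΩ03 : Ω (b 0) (b 3) = 0)
    (hΩ12 : Ω (b 1) (b 2) = 0) (hΩ13 : Ω (b 1) (b 3) = 0) (hΩ23 : Ω (b 2) (b 3) = σ) :
    (∀ x y : L, θ ⁅x, y⁆ = 0) ∧
    (∀ x y z : L, -Ω ⁅x, y⁆ z + Ω ⁅x, z⁆ y - Ω ⁅y, z⁆ x
        = θ x * Ω y z - θ y * Ω x z + θ z * Ω x y) ∧
    (∀ x y : L, Ω (J x) (J y) = Ω x y) ∧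
    (∀ x : L, x ≠ 0 → 0 < Ω x (J x)) := by
  have hlie := b.lie_eq_of_rh3 h01 h02 h03 h12 h13 h23
  have hΩ := LinearMap.IsAlt.apply_eq_mul_e12_add_e34 b (fun x => by linarith [halt x x])
    hΩ01 hΩ02 hΩ03 hΩ12 hΩ13 hΩ23
  have hθ (x : L) : θ x = -b.repr x 3 := by
    simp [b.apply_eq_sum_repr θ x, Fin.sum_univ_four, hθ0, hθ1, hθ2, hθ3]
  have hJ := b.repr_apply_of_complexStructure hJ0 hJ1 hJ2 hJ3
  refine ⟨fun x y => by simp [hlie, hθ2], fun x y z => ?_, fun x y => ?_, fun x hx => ?_⟩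
  · simp only [hlie, hΩ, hθ, map_smul, LinearMap.smul_apply, smul_eq_mul, Basis.repr_self,
      Finsupp.single_apply, Fin.reduceEq, if_true, if_false]
    ring
  · simp only [hΩ, hJ, Matrix.cons_val_zero, Matrix.cons_val_one, Matrix.cons_val]
    ring
  · have hsq : Ω x (J x) = σ * ∑ i, b.repr x i ^ 2 := by
      simp only [hΩ, hJ, Fin.sum_univ_four, Matrix.cons_val_zero, Matrix.cons_val_one,
        Matrix.cons_val]
      ring
    rw [hsq]
    exact mul_pos hσ (b.sum_sq_repr_pos hx)
end

section
/- On the Lie algebra rr'_{3,0} with structure equations de^2 = -e^1∧e^3, de^3 = e^1∧e^2, de^1 = de^4 = 0, and complex structure J defined on the dual coframe by Je^1=e^4, Je^2=e^3 (so Je^4=-e^1, Je^3=-e^2), there is no lcK structure: every 2-form Ω with dΩ = θ∧Ω for some nonzero closed 1-form θ satisfies Ω(e_2, Je_2) = 0, hence fails positivity. -/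
/-!
Closedness of `θ` makes it vanish on `[L, L] ∋ e₂, e₃`. Evaluating `dΩ = θ ∧ Ω` on
`(eᵢ, e₂, e₃)` for `i = 1, 4`, the left side vanishes because `ad eᵢ` maps `e₂, e₃` into the
lines spanned by each other, so `θ(eᵢ) Ω(e₂, e₃) = 0`. As `θ ≠ 0`, some `θ(eᵢ) ≠ 0`, hence
`Ω(e₂, Je₂) = Ω(e₂, e₃) = 0`.
-/

section TwistedClosed

variable {L : Type*} [LieRing L] [LieAlgebra ℝ L] {θ : L →ₗ[ℝ] ℝ}
  {Ω : L →ₗ[ℝ] L →ₗ[ℝ] ℝ}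

theorem apply_mul_eq_zero_of_lie_mem_span (hskew : ∀ x y : L, Ω x y = - Ω y x)
    (hd : ∀ x y z : L, -Ω ⁅x, y⁆ z + Ω ⁅x, z⁆ y - Ω ⁅y, z⁆ x
      = θ x * Ω y z - θ y * Ω x z + θ z * Ω x y)
    {x y z : L} (hyz : ⁅y, z⁆ = 0) (hxy : ⁅x, y⁆ ∈ ℝ ∙ z) (hxz : ⁅x, z⁆ ∈ ℝ ∙ y)
    (hy : θ y = 0) (hz : θ z = 0) : θ x * Ω y z = 0 := by
  have hdiag : ∀ v : L, Ω v v = 0 := fun v => by linarith [hskew v v]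
  obtain ⟨a, ha⟩ := Submodule.mem_span_singleton.mp hxy
  obtain ⟨c, hc⟩ := Submodule.mem_span_singleton.mp hxz
  have := hd x y z
  rw [← ha, ← hc, hyz] at this
  simpa [hdiag, hy, hz] using this.symm

end TwistedClosed

theorem stmt5_general (L : Type*) [LieRing L] [LieAlgebra ℝ L]
    (b : Module.Basis (Fin 4) ℝ L)
    (h01 : ⁅b 0, b 1⁆ = -(b 2)) (h02 : ⁅b 0, b 2⁆ = b 1)
    (h12 : ⁅b 1, b 2⁆ = 0) (h13 : ⁅b 1, b 3⁆ = 0) (h23 : ⁅b 2, b 3⁆ = 0)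
    (J : L →ₗ[ℝ] L)
    (hJ1 : J (b 1) = b 2) :
    ∀ θ : L →ₗ[ℝ] ℝ, θ ≠ 0 → (∀ x y : L, θ ⁅x, y⁆ = 0) →
    ∀ Ω : L →ₗ[ℝ] L →ₗ[ℝ] ℝ, (∀ x y : L, Ω x y = - Ω y x) →
      (∀ x y z : L, -Ω ⁅x, y⁆ z + Ω ⁅x, z⁆ y - Ω ⁅y, z⁆ x
          = θ x * Ω y z - θ y * Ω x z + θ z * Ω x y) →
      Ω (b 1) (J (b 1)) = 0 ∧ ¬ (∀ x : L, x ≠ 0 → 0 < Ω x (J x)) := by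
  intro θ hθ hclosed Ω hskew hd
  have hθ1 : θ (b 1) = 0 := by simpa [h02] using hclosed (b 0) (b 2)
  have hθ2 : θ (b 2) = 0 := by simpa [h01] using hclosed (b 0) (b 1)
  have hθ0 : θ (b 0) * Ω (b 1) (b 2) = 0 :=
    apply_mul_eq_zero_of_lie_mem_span hskew hd h12
      (by rw [h01]; exact Submodule.neg_mem _ (Submodule.mem_span_singleton_self _))
      (by rw [h02]; exact Submodule.mem_span_singleton_self _) hθ1 hθ2
  have hθ3 : θ (b 3) * Ω (b 1) (b 2) = 0 :=
    apply_mul_eq_zero_of_lie_mem_span hskew hd h12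
      (by rw [← lie_skew, h13, neg_zero]; exact zero_mem _)
      (by rw [← lie_skew, h23, neg_zero]; exact zero_mem _) hθ1 hθ2
  have hΩ12 : Ω (b 1) (b 2) = 0 := by
    by_contra hne
    refine hθ (b.ext fun i => ?_)
    fin_cases i
    exacts [(mul_eq_zero.mp hθ0).resolve_right hne, hθ1, hθ2,
      (mul_eq_zero.mp hθ3).resolve_right hne]
  have hΩJ : Ω (b 1) (J (b 1)) = 0 := by rw [hJ1, hΩ12]
  exact ⟨hΩJ, fun hpos => (hpos (b 1) (b.ne_zero 1)).ne' hΩJ⟩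

/-- On `rr'_{3,0}` (brackets `[e1,e2] = -e3`, `[e1,e3] = e2`) with the complex
structure `J e1 = e4, J e2 = e3`, there is no lcK structure: any 2-form `Ω` with
`dΩ = θ ∧ Ω` for some nonzero closed 1-form `θ` satisfies `Ω(e2, Je2) = 0`,
hence fails positivity. -/
theorem stmt5 (L : Type*) [LieRing L] [LieAlgebra ℝ L]
    (b : Module.Basis (Fin 4) ℝ L)
    (h01 : ⁅b 0, b 1⁆ = -(b 2)) (h02 : ⁅b 0, b 2⁆ = b 1) (h03 : ⁅b 0, b 3⁆ = 0)
    (h12 : ⁅b 1, b 2⁆ = 0) (h13 : ⁅b 1, b 3⁆ = 0) (h23 : ⁅b 2, b 3⁆ = 0)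
    (J : L →ₗ[ℝ] L)
    (hJ0 : J (b 0) = b 3) (hJ1 : J (b 1) = b 2)
    (hJ2 : J (b 2) = -(b 1)) (hJ3 : J (b 3) = -(b 0)) :
    ∀ θ : L →ₗ[ℝ] ℝ, θ ≠ 0 → (∀ x y : L, θ ⁅x, y⁆ = 0) →
    ∀ Ω : L →ₗ[ℝ] L →ₗ[ℝ] ℝ, (∀ x y : L, Ω x y = - Ω y x) →
      (∀ x y z : L, -Ω ⁅x, y⁆ z + Ω ⁅x, z⁆ y - Ω ⁅y, z⁆ x
          = θ x * Ω y z - θ y * Ω x z + θ z * Ω x y) →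
      Ω (b 1) (J (b 1)) = 0 ∧ ¬ (∀ x : L, x ≠ 0 → 0 < Ω x (J x)) :=
  stmt5_general L b h01 h02 h12 h13 h23 J hJ1
end

section
/- On the Lie algebra r_{4,1} with structure equations de^1 = e^1∧e^4, de^2 = e^2∧e^4 + e^3∧e^4, de^3 = e^3∧e^4, de^4 = 0, every 2-form Ω satisfying dΩ = θ∧Ω for the closed 1-form θ = -2e^4 has zero coefficient on e^1∧e^2; hence for the complex structure J with Je^1=e^2, Je^3=-e^4, Ω can never be positive, so r_{4,1} admits no lcK structure with this complex structure. -/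
/-!
Evaluating `dΩ = θ ∧ Ω` on `(e₁, e₃, e₄)` gives `-2 Ω(e₁, e₃) - Ω(e₁, e₂) = -2 Ω(e₁, e₃)`,
so `Ω(e₁, e₂) = 0`. Since `Je₁ = e₂`, positivity fails already at `x = e₁`.
-/

theorem apply_eq_zero_of_twisted_closed {L : Type*} [LieRing L] [LieAlgebra ℝ L]
    {e₀ e₁ e₂ e₃ : L} (h02 : ⁅e₀, e₂⁆ = 0) (h03 : ⁅e₀, e₃⁆ = -e₀) (h23 : ⁅e₂, e₃⁆ = -e₁ - e₂)
    {θ : L →ₗ[ℝ] ℝ} (hθ0 : θ e₀ = 0) (hθ2 : θ e₂ = 0) (hθ3 : θ e₃ = -2)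
    {Ω : L →ₗ[ℝ] L →ₗ[ℝ] ℝ} (hskew : ∀ x y : L, Ω x y = -Ω y x)
    (hclosed : ∀ x y z : L, -Ω ⁅x, y⁆ z + Ω ⁅x, z⁆ y - Ω ⁅y, z⁆ x
      = θ x * Ω y z - θ y * Ω x z + θ z * Ω x y) :
    Ω e₀ e₁ = 0 := by
  have key := hclosed e₀ e₂ e₃
  simp only [h02, h03, h23, map_neg, map_sub, map_zero, LinearMap.neg_apply,
    LinearMap.sub_apply, LinearMap.zero_apply, hθ0, hθ2, hθ3] at key
  linarith [hskew e₁ e₀, hskew e₂ e₀]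

theorem not_forall_pos_of_apply_eq_zero {M : Type*} [AddCommGroup M] [Module ℝ M]
    {Ω : M →ₗ[ℝ] M →ₗ[ℝ] ℝ} {J : M →ₗ[ℝ] M} {x : M} (hx : x ≠ 0) (hΩ : Ω x (J x) = 0) :
    ¬ ∀ y : M, y ≠ 0 → 0 < Ω y (J y) :=
  fun hpos => (hpos x hx).ne' hΩ

theorem stmt6_general (L : Type*) [LieRing L] [LieAlgebra ℝ L]
    (b : Module.Basis (Fin 4) ℝ L)
    (h02 : ⁅b 0, b 2⁆ = 0) (h03 : ⁅b 0, b 3⁆ = -(b 0))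
    (h23 : ⁅b 2, b 3⁆ = -(b 1) - b 2)
    (J : L →ₗ[ℝ] L)
    (hJ0 : J (b 0) = b 1)
    (θ : L →ₗ[ℝ] ℝ)
    (hθ0 : θ (b 0) = 0) (hθ2 : θ (b 2) = 0) (hθ3 : θ (b 3) = -2) :
    ∀ Ω : L →ₗ[ℝ] L →ₗ[ℝ] ℝ, (∀ x y : L, Ω x y = - Ω y x) →
      (∀ x y z : L, -Ω ⁅x, y⁆ z + Ω ⁅x, z⁆ y - Ω ⁅y, z⁆ x
          = θ x * Ω y z - θ y * Ω x z + θ z * Ω x y) →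
      Ω (b 0) (b 1) = 0 ∧ ¬ (∀ x : L, x ≠ 0 → 0 < Ω x (J x)) := by
  intro Ω hskew hclosed
  have h01 : Ω (b 0) (b 1) = 0 :=
    apply_eq_zero_of_twisted_closed h02 h03 h23 hθ0 hθ2 hθ3 hskew hclosed
  exact ⟨h01, not_forall_pos_of_apply_eq_zero (b.ne_zero 0) (by rw [hJ0, h01])⟩

/-- On `r_{4,1}` (brackets `[e1,e4]=-e1`, `[e2,e4]=-e2`, `[e3,e4]=-e2-e3`), every
2-form `Ω` with `dΩ = θ ∧ Ω` for `θ = -2e⁴` has zero coefficient on `e¹∧e²`;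
hence for the complex structure `J` with `Je1=e2, Je3=-e4`, `Ω` can never be positive,
so `r_{4,1}` admits no lcK structure with this complex structure. -/
theorem stmt6 (L : Type*) [LieRing L] [LieAlgebra ℝ L]
    (b : Module.Basis (Fin 4) ℝ L)
    (h01 : ⁅b 0, b 1⁆ = 0) (h02 : ⁅b 0, b 2⁆ = 0) (h03 : ⁅b 0, b 3⁆ = -(b 0))
    (h12 : ⁅b 1, b 2⁆ = 0) (h13 : ⁅b 1, b 3⁆ = -(b 1))
    (h23 : ⁅b 2, b 3⁆ = -(b 1) - b 2)
    (J : L →ₗ[ℝ] L)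
    (hJ0 : J (b 0) = b 1) (hJ1 : J (b 1) = -(b 0))
    (hJ2 : J (b 2) = -(b 3)) (hJ3 : J (b 3) = b 2)
    (θ : L →ₗ[ℝ] ℝ)
    (hθ0 : θ (b 0) = 0) (hθ1 : θ (b 1) = 0) (hθ2 : θ (b 2) = 0) (hθ3 : θ (b 3) = -2) :
    ∀ Ω : L →ₗ[ℝ] L →ₗ[ℝ] ℝ, (∀ x y : L, Ω x y = - Ω y x) →
      (∀ x y z : L, -Ω ⁅x, y⁆ z + Ω ⁅x, z⁆ y - Ω ⁅y, z⁆ x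
          = θ x * Ω y z - θ y * Ω x z + θ z * Ω x y) →
      Ω (b 0) (b 1) = 0 ∧ ¬ (∀ x : L, x ≠ 0 → 0 < Ω x (J x)) :=
  stmt6_general L b h02 h03 h23 J hJ0 θ hθ0 hθ2 hθ3
end

section
/- In the Lie algebra d_{4,λ} with brackets [e1,e4]=-λe1, [e2,e4]=-(1-λ)e2, [e1,e2]=e3, [e3,e4]=-e3, the adjoint map ad_A of a generic element A = a1e1+a2e2+a3e3+a4e4 is skew-symmetric with respect to the inner product making e1,...,e4 orthonormal if and only if A = 0. Consequently d_{4,λ} admits no Vaisman structure for any λ. -/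
/-!
With respect to an orthonormal basis, skew-symmetry of `ad_A` says that its matrix is
antisymmetric. Write `A = a₁e₁ + a₂e₂ + a₃e₃ + a₄e₄` (in Lean `b i` is `e_{i+1}` and `a i` is
`a_{i+1}`). Since `e₃` commutes with `e₁, e₂` and `[e₃, e₄] = -e₃`, the column of `ad_A` at `e₃`
is `(0, 0, a₄, 0)`, whereas its row at `e₃`, the `e₃`-coordinates of `[A, eᵢ]`, is
`(-a₂, a₁, a₄, -a₃)` and contains every coefficient of `A`. Antisymmetry forces `A = 0`.
-/

namespace Module.Basis

variable {R M ι : Type*} [CommRing R] [AddCommGroup M] [Module R M] [DecidableEq ι]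
  {b : Basis ι R M} {B : M →ₗ[R] M →ₗ[R] R}

theorem bilin_apply_basis_right (hB : ∀ i j, B (b i) (b j) = if i = j then 1 else 0)
    (x : M) (j : ι) : B x (b j) = b.repr x j := by
  have h : B.flip (b j) = b.coord j := b.ext fun i => by simp [hB, Finsupp.single_apply]
  exact LinearMap.congr_fun h x

theorem bilin_apply_basis_left (hB : ∀ i j, B (b i) (b j) = if i = j then 1 else 0)
    (i : ι) (y : M) : B (b i) y = b.repr y i := by
  have h : B (b i) = b.coord i := b.ext fun j => by simp [hB, Finsupp.single_apply, eq_comm]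
  exact LinearMap.congr_fun h y

theorem repr_apply_eq_neg_of_skew (hB : ∀ i j, B (b i) (b j) = if i = j then 1 else 0)
    {f : M → M} (hf : ∀ x y, B (f x) y = -B x (f y)) (i j : ι) :
    b.repr (f (b i)) j = -b.repr (f (b j)) i := by
  rw [← bilin_apply_basis_right hB, ← bilin_apply_basis_left hB, hf]

end Module.Basis

section D4

variable {lam : ℝ} {L : Type*} [LieRing L] [LieAlgebra ℝ L] {b : Module.Basis (Fin 4) ℝ L}

theorem d4_lie_sum_basis_two (h02 : ⁅b 0, b 2⁆ = 0) (h12 : ⁅b 1, b 2⁆ = 0)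
    (h23 : ⁅b 2, b 3⁆ = -(b 2)) (a : Fin 4 → ℝ) :
    ⁅∑ i, a i • b i, b 2⁆ = a 3 • b 2 := by
  simp [Fin.sum_univ_four, h02, h12, ← lie_skew (b 3), h23]

theorem d4_repr_lie_sum_basis_two (h01 : ⁅b 0, b 1⁆ = b 2) (h02 : ⁅b 0, b 2⁆ = 0)
    (h03 : ⁅b 0, b 3⁆ = -(lam • b 0)) (h12 : ⁅b 1, b 2⁆ = 0)
    (h13 : ⁅b 1, b 3⁆ = -((1 - lam) • b 1)) (h23 : ⁅b 2, b 3⁆ = -(b 2))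
    (a : Fin 4 → ℝ) (j : Fin 4) :
    b.repr ⁅∑ i, a i • b i, b j⁆ 2 = ![-a 1, a 0, a 3, -a 2] j := by
  have h10 : ⁅b 1, b 0⁆ = -b 2 := by rw [← lie_skew, h01]
  have h20 : ⁅b 2, b 0⁆ = 0 := by rw [← lie_skew, h02, neg_zero]
  have h21 : ⁅b 2, b 1⁆ = 0 := by rw [← lie_skew, h12, neg_zero]
  have h30 : ⁅b 3, b 0⁆ = lam • b 0 := by rw [← lie_skew, h03, neg_neg]
  have h31 : ⁅b 3, b 1⁆ = (1 - lam) • b 1 := by rw [← lie_skew, h13, neg_neg]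
  have h32 : ⁅b 3, b 2⁆ = b 2 := by rw [← lie_skew, h23, neg_neg]
  fin_cases j <;>
    simp [Fin.sum_univ_four, h01, h02, h03, h12, h13, h23, h10, h20, h21, h30, h31, h32]

end D4

/-- In `d_{4,λ}` with brackets `[e1,e4]=-λe1`, `[e2,e4]=-(1-λ)e2`, `[e1,e2]=e3`,
`[e3,e4]=-e3`, the adjoint map `ad_A` of `A = a1e1 + a2e2 + a3e3 + a4e4` is
skew-symmetric with respect to the inner product making `e1,…,e4` orthonormal
if and only if `A = 0`. -/
theorem stmt7 (lam : ℝ) (L : Type*) [LieRing L] [LieAlgebra ℝ L]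
    (b : Module.Basis (Fin 4) ℝ L)
    (h01 : ⁅b 0, b 1⁆ = b 2) (h02 : ⁅b 0, b 2⁆ = 0)
    (h03 : ⁅b 0, b 3⁆ = -(lam • b 0))
    (h12 : ⁅b 1, b 2⁆ = 0) (h13 : ⁅b 1, b 3⁆ = -((1 - lam) • b 1))
    (h23 : ⁅b 2, b 3⁆ = -(b 2))
    (B : L →ₗ[ℝ] L →ₗ[ℝ] ℝ)
    (hB : ∀ i j : Fin 4, B (b i) (b j) = if i = j then 1 else 0) :
    ∀ a : Fin 4 → ℝ,
      ((∀ x y : L, B ⁅∑ i, a i • b i, x⁆ y = - B x ⁅∑ i, a i • b i, y⁆) ↔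
        (∑ i, a i • b i) = (0 : L)) := by
  intro a
  refine ⟨fun hskew => ?_, fun hA x y => by simp [hA]⟩
  have h (i : Fin 4) : ![-a 1, a 0, a 3, -a 2] i = -(a 3 • b.repr (b 2)) i := by
    rw [← d4_repr_lie_sum_basis_two h01 h02 h03 h12 h13 h23, ← map_smul,
      ← d4_lie_sum_basis_two h02 h12 h23]
    exact b.repr_apply_eq_neg_of_skew hB hskew i 2
  have ha0 : a 0 = 0 := by simpa using h 1
  have ha1 : a 1 = 0 := by simpa using h 0
  have ha2 : a 2 = 0 := by simpa using h 3
  have ha3 : a 3 = 0 := by linarith [show a 3 = -a 3 by simpa using h 2]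
  simp [Fin.sum_univ_four, ha0, ha1, ha2, ha3]
end

section
/- Let h be a Lie algebra with an lcK structure (J,Ω,θ), V a real vector space of dimension 2n with Hermitian structure (J0,⟨·,·⟩0), and π: h → End(V) a representation of the form π(X) = -(1/2)θ(X)·Id + ρ(X) with ρ(X) ∈ u(n) (skew-symmetric and commuting with J0) for all X. Then on the semidirect product g = h ⋉_π V, the extended structure J'|_h = J, J'|_V = J0, Ω'|_{h×h}=Ω, Ω'|_{V×V}=ω0 (the fundamental form of (J0,⟨·,·⟩0)), Ω'(h,V)=0, θ'|_h=θ, θ'|_V=0 is an lcK structure. -/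
/-- An lcK structure on a real Lie algebra: an integrable complex structure `J`,
a nonzero closed 1-form `θ`, and a `J`-invariant positive 2-form `Ω` with
`dΩ = θ ∧ Ω` (Chevalley–Eilenberg conventions). -/
def IsLcK (L : Type*) [LieRing L] [LieAlgebra ℝ L]
    (J : L →ₗ[ℝ] L) (Ω : L →ₗ[ℝ] L →ₗ[ℝ] ℝ) (θ : L →ₗ[ℝ] ℝ) : Prop :=
  (∀ x : L, J (J x) = -x) ∧
  (∀ x y : L, -⁅x, y⁆ + ⁅J x, J y⁆ - J ⁅J x, y⁆ - J ⁅x, J y⁆ = 0) ∧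
  θ ≠ 0 ∧
  (∀ x y : L, θ ⁅x, y⁆ = 0) ∧
  (∀ x y : L, Ω x y = - Ω y x) ∧
  (∀ x y z : L, -Ω ⁅x, y⁆ z + Ω ⁅x, z⁆ y - Ω ⁅y, z⁆ x
      = θ x * Ω y z - θ y * Ω x z + θ z * Ω x y) ∧
  (∀ x y : L, Ω (J x) (J y) = Ω x y) ∧
  (∀ x : L, x ≠ 0 → 0 < Ω x (J x))

/-!
Every element of `h ⋉_π V` is `X + v`, and `J'`, `Ω'`, `θ'` are block diagonal for
this splitting, so each lcK axiom for `(J', Ω', θ')` splits into an `h`-part, which is the same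
axiom for `(J, Ω, θ)`, and a `V`-part. The `V`-part of integrability holds because `π X`
commutes with `J₀`. In `dΩ' = θ' ∧ Ω'` the `V`-part is the identity
`ω₀(π X v, w) + ω₀(v, π X w) = -θ(X) ω₀(v, w)`: the unitary part `ρ X` preserves `ω₀`, and the
scalar part `-½θ(X)` is exactly what makes the conformal factor match `θ`.
-/

section Hermitian

variable {R V : Type*} [CommRing R] [AddCommGroup V] [Module R V]
  {J0 : V →ₗ[R] V} {ip : V →ₗ[R] V →ₗ[R] R}

def fundamentalForm (J0 : V →ₗ[R] V) (ip : V →ₗ[R] V →ₗ[R] R) : V →ₗ[R] V →ₗ[R] R :=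
  ip ∘ₗ J0

@[simp]
lemma fundamentalForm_apply (v w : V) : fundamentalForm J0 ip v w = ip (J0 v) w := rfl

lemma fundamentalForm_skew (hJ0 : ∀ v, J0 (J0 v) = -v) (hipsym : ∀ v w, ip v w = ip w v)
    (hherm : ∀ v w, ip (J0 v) (J0 w) = ip v w) (v w : V) :
    fundamentalForm J0 ip v w = -fundamentalForm J0 ip w v := by
  simp only [fundamentalForm_apply]
  rw [hipsym, ← hherm w, hJ0, map_neg]

lemma fundamentalForm_apply_apply (hherm : ∀ v w, ip (J0 v) (J0 w) = ip v w) (v w : V) :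
    fundamentalForm J0 ip (J0 v) (J0 w) = fundamentalForm J0 ip v w := by
  simp only [fundamentalForm_apply, hherm]

lemma fundamentalForm_apply_self_pos [PartialOrder R]
    (hippos : ∀ v, v ≠ 0 → 0 < ip v v) (hherm : ∀ v w, ip (J0 v) (J0 w) = ip v w) (v : V)
    (hv : v ≠ 0) : 0 < fundamentalForm J0 ip v (J0 v) := by
  rw [fundamentalForm_apply, hherm]
  exact hippos v hv

lemma fundamentalForm_smul_id_add {c : R} {B : V →ₗ[R] V}
    (hBskew : ∀ v w, ip (B v) w = -ip v (B w)) (hBJ : ∀ v, B (J0 v) = J0 (B v)) (v w : V) :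
    fundamentalForm J0 ip ((c • LinearMap.id + B : V →ₗ[R] V) v) w
      + fundamentalForm J0 ip v ((c • LinearMap.id + B : V →ₗ[R] V) w)
      = 2 * c * fundamentalForm J0 ip v w := by
  have hB : ip (J0 (B v)) w = -ip (J0 v) (B w) := by rw [← hBJ, hBskew]
  simp only [fundamentalForm_apply, LinearMap.add_apply, LinearMap.smul_apply,
    LinearMap.id_apply, map_add, map_smul, smul_eq_mul, hB]
  ring

end Hermitian

section Decomposition

variable {R H G V : Type*} [CommRing R] [AddCommGroup H] [Module R H] [AddCommGroup G]
  [Module R G] [AddCommGroup V] [Module R V] {i : H →ₗ[R] G} {p : V →ₗ[R] G}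

lemma apply_apply_eq_neg_of_decomposition (hdec : ∀ g : G, ∃ X v, g = i X + p v)
    {J : H →ₗ[R] H} {J0 : V →ₗ[R] V} {J' : G →ₗ[R] G}
    (hJ' : ∀ X v, J' (i X + p v) = i (J X) + p (J0 v))
    (hJ : ∀ X, J (J X) = -X) (hJ0 : ∀ v, J0 (J0 v) = -v) (x : G) :
    J' (J' x) = -x := by
  obtain ⟨X, v, rfl⟩ := hdec x
  rw [hJ', hJ', hJ, hJ0, map_neg, map_neg, neg_add]

variable {Ω : H →ₗ[R] H →ₗ[R] R} {ω : V →ₗ[R] V →ₗ[R] R} {Ω' : G →ₗ[R] G →ₗ[R] R}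

lemma skew_of_decomposition (hdec : ∀ g : G, ∃ X v, g = i X + p v)
    (hΩ' : ∀ X v Y w, Ω' (i X + p v) (i Y + p w) = Ω X Y + ω v w)
    (hΩ : ∀ X Y, Ω X Y = -Ω Y X) (hω : ∀ v w, ω v w = -ω w v) (x y : G) :
    Ω' x y = -Ω' y x := by
  obtain ⟨X, v, rfl⟩ := hdec x
  obtain ⟨Y, w, rfl⟩ := hdec y
  rw [hΩ', hΩ', hΩ, hω, neg_add]

lemma invariant_of_decomposition (hdec : ∀ g : G, ∃ X v, g = i X + p v)
    {J : H →ₗ[R] H} {J0 : V →ₗ[R] V} {J' : G →ₗ[R] G}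
    (hJ' : ∀ X v, J' (i X + p v) = i (J X) + p (J0 v))
    (hΩ' : ∀ X v Y w, Ω' (i X + p v) (i Y + p w) = Ω X Y + ω v w)
    (hΩ : ∀ X Y, Ω (J X) (J Y) = Ω X Y) (hω : ∀ v w, ω (J0 v) (J0 w) = ω v w) (x y : G) :
    Ω' (J' x) (J' y) = Ω' x y := by
  obtain ⟨X, v, rfl⟩ := hdec x
  obtain ⟨Y, w, rfl⟩ := hdec y
  rw [hJ', hJ', hΩ', hΩ', hΩ, hω]

lemma pos_of_decomposition [PartialOrder R] [IsStrictOrderedRing R]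
    (hdec : ∀ g : G, ∃ X v, g = i X + p v)
    {J : H →ₗ[R] H} {J0 : V →ₗ[R] V} {J' : G →ₗ[R] G}
    (hJ' : ∀ X v, J' (i X + p v) = i (J X) + p (J0 v))
    (hΩ' : ∀ X v Y w, Ω' (i X + p v) (i Y + p w) = Ω X Y + ω v w)
    (hΩ : ∀ X, X ≠ 0 → 0 < Ω X (J X)) (hω : ∀ v, v ≠ 0 → 0 < ω v (J0 v)) (x : G)
    (hx : x ≠ 0) : 0 < Ω' x (J' x) := by
  obtain ⟨X, v, rfl⟩ := hdec x
  rw [hJ', hΩ']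
  rcases eq_or_ne X 0 with rfl | hX
  · have hv : v ≠ 0 := by rintro rfl; simp at hx
    simpa using hω v hv
  · have nonneg_ω : 0 ≤ ω v (J0 v) := by
      rcases eq_or_ne v 0 with rfl | hv
      · simp
      · exact (hω v hv).le
    exact add_pos_of_pos_of_nonneg (hΩ X hX) nonneg_ω

end Decomposition

section Semidirect

variable {R H G V : Type*} [CommRing R] [LieRing H] [LieAlgebra R H] [LieRing G]
  [LieAlgebra R G] [AddCommGroup V] [Module R V] {i : H →ₗ[R] G} {p : V →ₗ[R] G}
  {π : H → V →ₗ[R] V}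

lemma lie_add_add_of_semidirect (hii : ∀ X Y, ⁅i X, i Y⁆ = i ⁅X, Y⁆)
    (hip : ∀ X v, ⁅i X, p v⁆ = p (π X v)) (hpp : ∀ v w, ⁅p v, p w⁆ = 0) (X : H) (v : V)
    (Y : H) (w : V) : ⁅i X + p v, i Y + p w⁆ = i ⁅X, Y⁆ + p (π X w - π Y v) := by
  rw [add_lie, lie_add, lie_add, hii, hip, ← lie_skew (p v), hip, hpp, map_sub]
  abel

lemma nijenhuis_eq_zero_of_semidirect (hdec : ∀ g : G, ∃ X v, g = i X + p v)
    (hbr : ∀ X v Y w, ⁅i X + p v, i Y + p w⁆ = i ⁅X, Y⁆ + p (π X w - π Y v))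
    {J : H →ₗ[R] H} {J0 : V →ₗ[R] V} {J' : G →ₗ[R] G}
    (hJ' : ∀ X v, J' (i X + p v) = i (J X) + p (J0 v))
    (hN : ∀ X Y, -⁅X, Y⁆ + ⁅J X, J Y⁆ - J ⁅J X, Y⁆ - J ⁅X, J Y⁆ = 0)
    (hJ0 : ∀ v, J0 (J0 v) = -v) (hπJ : ∀ X v, π X (J0 v) = J0 (π X v)) (x y : G) :
    -⁅x, y⁆ + ⁅J' x, J' y⁆ - J' ⁅J' x, y⁆ - J' ⁅x, J' y⁆ = 0 := by
  obtain ⟨X, v, rfl⟩ := hdec x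
  obtain ⟨Y, w, rfl⟩ := hdec y
  rw [hJ', hJ', hbr, hbr, hbr, hbr, hJ', hJ']
  have hV : -(π X w - π Y v) + (π (J X) (J0 w) - π (J Y) (J0 v))
      - J0 (π (J X) w - π Y (J0 v)) - J0 (π X (J0 w) - π (J Y) v) = 0 := by
    rw [hπJ, hπJ, map_sub, map_sub, hπJ, hπJ, hJ0, hJ0]
    abel
  calc _ = i (-⁅X, Y⁆ + ⁅J X, J Y⁆ - J ⁅J X, Y⁆ - J ⁅X, J Y⁆)
        + p (-(π X w - π Y v) + (π (J X) (J0 w) - π (J Y) (J0 v))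
          - J0 (π (J X) w - π Y (J0 v)) - J0 (π X (J0 w) - π (J Y) v)) := by
        simp only [map_add, map_sub, map_neg]
        abel
    _ = 0 := by rw [hN, hV, map_zero, map_zero, add_zero]

lemma closed_of_semidirect (hdec : ∀ g : G, ∃ X v, g = i X + p v)
    (hbr : ∀ X v Y w, ⁅i X + p v, i Y + p w⁆ = i ⁅X, Y⁆ + p (π X w - π Y v))
    {θ : H →ₗ[R] R} {θ' : G →ₗ[R] R}
    (hθ' : ∀ X v, θ' (i X + p v) = θ X) (hθ : ∀ X Y : H, θ ⁅X, Y⁆ = 0) (x y : G) :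
    θ' ⁅x, y⁆ = 0 := by
  obtain ⟨X, v, rfl⟩ := hdec x
  obtain ⟨Y, w, rfl⟩ := hdec y
  rw [hbr, hθ', hθ]

lemma d_eq_wedge_of_semidirect (hdec : ∀ g : G, ∃ X v, g = i X + p v)
    (hbr : ∀ X v Y w, ⁅i X + p v, i Y + p w⁆ = i ⁅X, Y⁆ + p (π X w - π Y v))
    {θ : H →ₗ[R] R} {θ' : G →ₗ[R] R}
    {Ω : H →ₗ[R] H →ₗ[R] R} {ω : V →ₗ[R] V →ₗ[R] R} {Ω' : G →ₗ[R] G →ₗ[R] R}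
    (hθ' : ∀ X v, θ' (i X + p v) = θ X)
    (hΩ' : ∀ X v Y w, Ω' (i X + p v) (i Y + p w) = Ω X Y + ω v w)
    (hdΩ : ∀ X Y Z, -Ω ⁅X, Y⁆ Z + Ω ⁅X, Z⁆ Y - Ω ⁅Y, Z⁆ X
      = θ X * Ω Y Z - θ Y * Ω X Z + θ Z * Ω X Y)
    (hω : ∀ v w, ω v w = -ω w v)
    (hπω : ∀ X v w, ω (π X v) w + ω v (π X w) = -θ X * ω v w) (x y z : G) :
    -Ω' ⁅x, y⁆ z + Ω' ⁅x, z⁆ y - Ω' ⁅y, z⁆ x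
      = θ' x * Ω' y z - θ' y * Ω' x z + θ' z * Ω' x y := by
  obtain ⟨X, u, rfl⟩ := hdec x
  obtain ⟨Y, v, rfl⟩ := hdec y
  obtain ⟨Z, w, rfl⟩ := hdec z
  simp only [hbr, hΩ', hθ']
  simp only [map_sub, LinearMap.sub_apply]
  linear_combination hdΩ X Y Z - hπω X v w + hπω Y u w - hπω Z u v
    + hω (π X w) v - hω (π Y w) u + hω (π Z v) u

end Semidirect

theorem stmt9_general
    (H G : Type*) [LieRing H] [LieAlgebra ℝ H] [LieRing G] [LieAlgebra ℝ G]
    (V : Type*) [AddCommGroup V] [Module ℝ V]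
    (J : H →ₗ[ℝ] H) (Ω : H →ₗ[ℝ] H →ₗ[ℝ] ℝ) (θ : H →ₗ[ℝ] ℝ)
    (hlcK : IsLcK H J Ω θ)
    (J0 : V →ₗ[ℝ] V) (ip : V →ₗ[ℝ] V →ₗ[ℝ] ℝ)
    (hJ0 : ∀ v : V, J0 (J0 v) = -v)
    (hipsym : ∀ v w : V, ip v w = ip w v)
    (hippos : ∀ v : V, v ≠ 0 → 0 < ip v v)
    (hherm : ∀ v w : V, ip (J0 v) (J0 w) = ip v w)
    (π : H → V →ₗ[ℝ] V) (ρ : H → V →ₗ[ℝ] V)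
    (hπ : ∀ X : H, π X = (-(1 / 2 : ℝ) * θ X) • (LinearMap.id : V →ₗ[ℝ] V) + ρ X)
    (hρskew : ∀ (X : H) (v w : V), ip (ρ X v) w = - ip v (ρ X w))
    (hρJ : ∀ (X : H) (v : V), ρ X (J0 v) = J0 (ρ X v))
    -- `G` is the semidirect product `h ⋉_π V`:
    (i : H →ₗ[ℝ] G) (p : V →ₗ[ℝ] G)
    (hsplit : ∀ g : G, ∃! xv : H × V, g = i xv.1 + p xv.2)
    (hbii : ∀ X Y : H, ⁅i X, i Y⁆ = i ⁅X, Y⁆)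
    (hbip : ∀ (X : H) (v : V), ⁅i X, p v⁆ = p (π X v))
    (hbpp : ∀ v w : V, ⁅p v, p w⁆ = 0)
    -- the extended structure:
    (J' : G →ₗ[ℝ] G) (Ω' : G →ₗ[ℝ] G →ₗ[ℝ] ℝ) (θ' : G →ₗ[ℝ] ℝ)
    (hJ'i : ∀ X : H, J' (i X) = i (J X)) (hJ'p : ∀ v : V, J' (p v) = p (J0 v))
    (hΩ'hh : ∀ X Y : H, Ω' (i X) (i Y) = Ω X Y)
    (hΩ'vv : ∀ v w : V, Ω' (p v) (p w) = ip (J0 v) w)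
    (hΩ'hv : ∀ (X : H) (v : V), Ω' (i X) (p v) = 0)
    (hΩ'vh : ∀ (v : V) (X : H), Ω' (p v) (i X) = 0)
    (hθ'i : ∀ X : H, θ' (i X) = θ X) (hθ'p : ∀ v : V, θ' (p v) = 0) :
    IsLcK G J' Ω' θ' := by
  obtain ⟨hJJ, hN, hθne, hθcl, hΩskew, hdΩ, hΩJ, hΩpos⟩ := hlcK
  have hdec (g : G) : ∃ X v, g = i X + p v :=
    let ⟨xv, hg, _⟩ := hsplit g; ⟨xv.1, xv.2, hg⟩
  have hbr := lie_add_add_of_semidirect hbii hbip hbpp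
  have hJ' (X : H) (v : V) : J' (i X + p v) = i (J X) + p (J0 v) := by rw [map_add, hJ'i, hJ'p]
  have hθ' (X : H) (v : V) : θ' (i X + p v) = θ X := by rw [map_add, hθ'i, hθ'p, add_zero]
  have hΩ' (X : H) (v : V) (Y : H) (w : V) :
      Ω' (i X + p v) (i Y + p w) = Ω X Y + fundamentalForm J0 ip v w := by
    simp [hΩ'hh, hΩ'vv, hΩ'hv, hΩ'vh]
  have hπJ (X : H) (v : V) : π X (J0 v) = J0 (π X v) := by simp [hπ, hρJ]
  have hπω (X : H) (v w : V) : fundamentalForm J0 ip (π X v) w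
      + fundamentalForm J0 ip v (π X w) = -θ X * fundamentalForm J0 ip v w := by
    rw [hπ, fundamentalForm_smul_id_add (hρskew X) (hρJ X)]
    ring
  exact ⟨apply_apply_eq_neg_of_decomposition hdec hJ' hJJ hJ0,
    nijenhuis_eq_zero_of_semidirect hdec hbr hJ' hN hJ0 hπJ,
    fun h => hθne (LinearMap.ext fun X => by rw [← hθ'i, h]; rfl),
    closed_of_semidirect hdec hbr hθ' hθcl,
    skew_of_decomposition hdec hΩ' hΩskew (fundamentalForm_skew hJ0 hipsym hherm),
    d_eq_wedge_of_semidirect hdec hbr hθ' hΩ' hdΩ (fundamentalForm_skew hJ0 hipsym hherm) hπω,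
    invariant_of_decomposition hdec hJ' hΩ' hΩJ (fundamentalForm_apply_apply hherm),
    pos_of_decomposition hdec hJ' hΩ' hΩpos (fundamentalForm_apply_self_pos hippos hherm)⟩

/-- The lcK extension: if `h` has an lcK structure `(J,Ω,θ)` and `V` is a Hermitian
vector space of dimension `2n`, with a representation `π = -(1/2)θ·Id + ρ`,
`ρ(X) ∈ u(n)`, then the natural extended structure on `g = h ⋉_π V` is lcK. -/
theorem stmt9
    (H G : Type*) [LieRing H] [LieAlgebra ℝ H] [LieRing G] [LieAlgebra ℝ G]
    (V : Type*) [AddCommGroup V] [Module ℝ V]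
    (n : ℕ) (hn : Module.finrank ℝ V = 2 * n)
    (J : H →ₗ[ℝ] H) (Ω : H →ₗ[ℝ] H →ₗ[ℝ] ℝ) (θ : H →ₗ[ℝ] ℝ)
    (hlcK : IsLcK H J Ω θ)
    (J0 : V →ₗ[ℝ] V) (ip : V →ₗ[ℝ] V →ₗ[ℝ] ℝ)
    (hJ0 : ∀ v : V, J0 (J0 v) = -v)
    (hipsym : ∀ v w : V, ip v w = ip w v)
    (hippos : ∀ v : V, v ≠ 0 → 0 < ip v v)
    (hherm : ∀ v w : V, ip (J0 v) (J0 w) = ip v w)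
    (π : H → V →ₗ[ℝ] V) (ρ : H → V →ₗ[ℝ] V)
    (hπ : ∀ X : H, π X = (-(1 / 2 : ℝ) * θ X) • (LinearMap.id : V →ₗ[ℝ] V) + ρ X)
    (hρskew : ∀ (X : H) (v w : V), ip (ρ X v) w = - ip v (ρ X w))
    (hρJ : ∀ (X : H) (v : V), ρ X (J0 v) = J0 (ρ X v))
    -- `G` is the semidirect product `h ⋉_π V`:
    (i : H →ₗ[ℝ] G) (p : V →ₗ[ℝ] G)
    (hsplit : ∀ g : G, ∃! xv : H × V, g = i xv.1 + p xv.2)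
    (hbii : ∀ X Y : H, ⁅i X, i Y⁆ = i ⁅X, Y⁆)
    (hbip : ∀ (X : H) (v : V), ⁅i X, p v⁆ = p (π X v))
    (hbpp : ∀ v w : V, ⁅p v, p w⁆ = 0)
    -- the extended structure:
    (J' : G →ₗ[ℝ] G) (Ω' : G →ₗ[ℝ] G →ₗ[ℝ] ℝ) (θ' : G →ₗ[ℝ] ℝ)
    (hJ'i : ∀ X : H, J' (i X) = i (J X)) (hJ'p : ∀ v : V, J' (p v) = p (J0 v))
    (hΩ'hh : ∀ X Y : H, Ω' (i X) (i Y) = Ω X Y)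
    (hΩ'vv : ∀ v w : V, Ω' (p v) (p w) = ip (J0 v) w)
    (hΩ'hv : ∀ (X : H) (v : V), Ω' (i X) (p v) = 0)
    (hΩ'vh : ∀ (v : V) (X : H), Ω' (p v) (i X) = 0)
    (hθ'i : ∀ X : H, θ' (i X) = θ X) (hθ'p : ∀ v : V, θ' (p v) = 0) :
    IsLcK G J' Ω' θ' :=
  stmt9_general H G V J Ω θ hlcK J0 ip hJ0 hipsym hippos hherm π ρ hπ hρskew hρJ i p hsplit hbii
    hbip hbpp J' Ω' θ' hJ'i hJ'p hΩ'hh hΩ'vv hΩ'hv hΩ'vh hθ'i hθ'p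
end

section
/- Let (h, η, ξ, Φ, g) be a coKähler Lie algebra of dimension 2n-1 with fundamental form ω = g(·,Φ·), and let D be a derivation of h with Dω = αω (α ≠ 0), Dη = 0, Dξ = 0, DΦ = ΦD. Then on g = h ⋊_D ℝ, the 2-form Ω = ω + η∧θ with θ(X,a) = -αa satisfies dΩ = θ∧Ω and dθ = 0. -/
/-!
On the coKähler side only the skew-symmetry of `ω` matters: from `Φ² = -1 + η ⊗ ξ` one gets
`Φ ξ = 0` and `η ∘ Φ = 0`, compatibility of `g` then makes `Φ` skew-adjoint, so `ω = g(·, Φ·)` is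
skew. Together with `D*ω = αω` this gives `ω(Dq, p) - ω(Dp, q) = -α ω(p, q)`, which is exactly the
contribution of the `ℝ`-direction to `dΩ`: since `η`, `θ` vanish on brackets, `dΩ = dω + D*ω ∧ dt`,
and this equals `θ ∧ Ω` because `θ ∧ η ∧ θ = 0`.
-/

namespace AlmostContact

variable {R M : Type*} [CommRing R] [AddCommGroup M] [Module R M]
  {η : M →ₗ[R] R} {ξ : M} {Φ : M →ₗ[R] M}

theorem map_xi_eq_zero [IsReduced R] (hηξ : η ξ = 1) (hΦ2 : ∀ x, Φ (Φ x) = -x + η x • ξ) :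
    Φ ξ = 0 := by
  have hΦ2ξ : Φ (Φ ξ) = 0 := by rw [hΦ2, hηξ, one_smul, neg_add_cancel]
  -- `Φ² (Φ ξ) = Φ (Φ² ξ)` forces `Φ ξ` onto the line through `ξ`
  have hline : Φ ξ = η (Φ ξ) • ξ := by
    have h := hΦ2 (Φ ξ)
    rw [hΦ2ξ, map_zero] at h
    linear_combination (norm := module) h
  have hsq : η (Φ ξ) ^ 2 = 0 :=
    calc η (Φ ξ) ^ 2 = η (η (Φ ξ) • η (Φ ξ) • ξ) := by
          rw [map_smul, map_smul, hηξ, smul_eq_mul, smul_eq_mul, mul_one, sq]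
      _ = η (η (Φ ξ) • Φ ξ) := by rw [← hline]
      _ = η (Φ (Φ ξ)) := by conv_rhs => rw [hline, map_smul]
      _ = 0 := by rw [hΦ2ξ, map_zero]
  rw [hline, IsReduced.eq_zero _ ⟨2, hsq⟩, zero_smul]

theorem eta_map_eq_zero [IsReduced R] (hηξ : η ξ = 1) (hΦ2 : ∀ x, Φ (Φ x) = -x + η x • ξ)
    (x : M) : η (Φ x) = 0 := by
  have h : η (Φ x) • ξ = 0 := by
    have h := congrArg Φ (hΦ2 x)
    rw [hΦ2 (Φ x), map_add, map_neg, map_smul, map_xi_eq_zero hηξ hΦ2, smul_zero] at h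
    linear_combination (norm := module) h
  simpa [hηξ] using congrArg η h

variable {g : M →ₗ[R] M →ₗ[R] R}

theorem metric_xi_left [IsReduced R] (hηξ : η ξ = 1) (hΦ2 : ∀ x, Φ (Φ x) = -x + η x • ξ)
    (hcomp : ∀ x y, g (Φ x) (Φ y) = g x y - η x * η y) (y : M) : g ξ y = η y := by
  have h := hcomp ξ y
  rw [map_xi_eq_zero hηξ hΦ2, map_zero, LinearMap.zero_apply, hηξ, one_mul] at h
  exact sub_eq_zero.mp h.symm

theorem metric_map_left [IsReduced R] (hηξ : η ξ = 1) (hΦ2 : ∀ x, Φ (Φ x) = -x + η x • ξ)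
    (hcomp : ∀ x y, g (Φ x) (Φ y) = g x y - η x * η y) (x y : M) :
    g (Φ x) y = -g x (Φ y) := by
  have h := hcomp (Φ x) y
  rw [hΦ2, eta_map_eq_zero hηξ hΦ2, zero_mul, sub_zero] at h
  simp only [map_add, map_neg, map_smul, LinearMap.add_apply, LinearMap.neg_apply,
    LinearMap.smul_apply, smul_eq_mul, metric_xi_left hηξ hΦ2 hcomp,
    eta_map_eq_zero hηξ hΦ2, mul_zero, add_zero] at h
  linear_combination -h

theorem fundamentalForm_skew [IsReduced R] (hgsym : ∀ x y, g x y = g y x) (hηξ : η ξ = 1)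
    (hΦ2 : ∀ x, Φ (Φ x) = -x + η x • ξ)
    (hcomp : ∀ x y, g (Φ x) (Φ y) = g x y - η x * η y) (x y : M) :
    g y (Φ x) = -g x (Φ y) := by
  rw [hgsym, metric_map_left hηξ hΦ2 hcomp]

end AlmostContact

section Semidirect

variable {R L : Type*} [CommRing R] [LieRing L] [LieAlgebra R L]

/-- The bracket of `L ⋊_D R`. -/
def semidirectBracket (D : L →ₗ[R] L) (u v : L × R) : L × R :=
  (⁅u.1, v.1⁆ + u.2 • D v.1 - v.2 • D u.1, 0)

theorem map_semidirectBracket_fst {N : Type*} [AddCommGroup N] [Module R N] (φ : L →ₗ[R] N)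
    (D : L →ₗ[R] L) (u v : L × R) :
    φ (semidirectBracket D u v).1 = φ ⁅u.1, v.1⁆ + u.2 • φ (D v.1) - v.2 • φ (D u.1) := by
  simp [semidirectBracket]

theorem semidirectBracket_snd (D : L →ₗ[R] L) (u v : L × R) : (semidirectBracket D u v).2 = 0 :=
  rfl

theorem conformal_derivation_sub (ω : L →ₗ[R] L →ₗ[R] R) (D : L →ₗ[R] L) (α : R)
    (hskew : ∀ x y, ω y x = -ω x y) (hDω : ∀ x y, ω (D x) y + ω x (D y) = α * ω x y)
    (p q : L) : ω (D q) p - ω (D p) q = -α * ω p q := by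
  linear_combination hskew (D q) p - hDω p q

/-- `Ω = ω + η ∧ θ` on `L ⋊_D R` satisfies `dΩ = θ ∧ Ω`, in Chevalley–Eilenberg form. -/
theorem semidirectBracket_d_eq_wedge (ω : L →ₗ[R] L →ₗ[R] R) (η : L →ₗ[R] R)
    (D : L →ₗ[R] L) (α : R) (hskew : ∀ x y, ω y x = -ω x y)
    (hdω : ∀ x y z : L, -ω ⁅x, y⁆ z + ω ⁅x, z⁆ y - ω ⁅y, z⁆ x = 0)
    (hdη : ∀ x y : L, η ⁅x, y⁆ = 0) (hDη : ∀ x, η (D x) = 0)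
    (hDω : ∀ x y, ω (D x) y + ω x (D y) = α * ω x y)
    (θ : L × R → R) (hθ : ∀ u, θ u = -α * u.2)
    (Ω : L × R → L × R → R) (hΩ : ∀ u v, Ω u v = ω u.1 v.1 + η u.1 * θ v - η v.1 * θ u)
    (u v w : L × R) :
    -Ω (semidirectBracket D u v) w + Ω (semidirectBracket D u w) v
        - Ω (semidirectBracket D v w) u = θ u * Ω v w - θ v * Ω u w + θ w * Ω u v := by
  have hΩbr : ∀ s t r, Ω (semidirectBracket D s t) r
      = ω ⁅s.1, t.1⁆ r.1 + s.2 * ω (D t.1) r.1 - t.2 * ω (D s.1) r.1 := by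
    intro s t r
    simp only [hΩ, hθ, semidirectBracket_snd, map_semidirectBracket_fst, LinearMap.add_apply,
      LinearMap.sub_apply, LinearMap.smul_apply, smul_eq_mul, hdη, hDη]
    ring
  obtain ⟨x, a⟩ := u
  obtain ⟨y, b⟩ := v
  obtain ⟨z, c⟩ := w
  simp only [hΩbr, hΩ, hθ]
  have key := conformal_derivation_sub ω D α hskew hDω
  linear_combination hdω x y z + a * key y z - b * key x z + c * key x y

end Semidirect

theorem stmt12_general (H : Type*) [LieRing H] [LieAlgebra ℝ H]
    (gm : H →ₗ[ℝ] H →ₗ[ℝ] ℝ) (η : H →ₗ[ℝ] ℝ) (ξ : H) (Φ : H →ₗ[ℝ] H)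
    (D : H →ₗ[ℝ] H) (α : ℝ)
    (hgsym : ∀ x y : H, gm x y = gm y x)
    (hηξ : η ξ = 1)
    (hΦ2 : ∀ x : H, Φ (Φ x) = -x + η x • ξ)
    (hcomp : ∀ x y : H, gm (Φ x) (Φ y) = gm x y - η x * η y)
    (ω : H → H → ℝ) (hω : ∀ x y : H, ω x y = gm x (Φ y))
    (hdη : ∀ x y : H, η ⁅x, y⁆ = 0)
    (hdω : ∀ x y z : H, -ω ⁅x, y⁆ z + ω ⁅x, z⁆ y - ω ⁅y, z⁆ x = 0)
    (hDω : ∀ x y : H, ω (D x) y + ω x (D y) = α * ω x y)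
    (hDη : ∀ x : H, η (D x) = 0)
    -- the semidirect product `h ⋊_D ℝ`, realized on `H × ℝ`:
    (br : H × ℝ → H × ℝ → H × ℝ)
    (hbr : ∀ u v : H × ℝ, br u v = (⁅u.1, v.1⁆ + u.2 • D v.1 - v.2 • D u.1, 0))
    (θ : H × ℝ → ℝ) (hθ : ∀ u : H × ℝ, θ u = -α * u.2)
    (Ω : H × ℝ → H × ℝ → ℝ)
    (hΩ : ∀ u v : H × ℝ, Ω u v = ω u.1 v.1 + η u.1 * θ v - η v.1 * θ u) :
    (∀ u v : H × ℝ, θ (br u v) = 0) ∧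
    (∀ u v w : H × ℝ, -Ω (br u v) w + Ω (br u w) v - Ω (br v w) u
        = θ u * Ω v w - θ v * Ω u w + θ w * Ω u v) := by
  obtain rfl : br = semidirectBracket D := funext₂ hbr
  obtain rfl : ω = fun x y => gm.compl₂ Φ x y := funext₂ hω
  have hskew : ∀ x y, gm.compl₂ Φ y x = -gm.compl₂ Φ x y :=
    AlmostContact.fundamentalForm_skew hgsym hηξ hΦ2 hcomp
  refine ⟨fun u v => by rw [hθ, semidirectBracket_snd, mul_zero], ?_⟩
  exact semidirectBracket_d_eq_wedge (gm.compl₂ Φ) η D α hskew hdω hdη hDη hDω θ hθ Ω hΩ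

/-- Let `(h, η, ξ, Φ, g)` be a coKähler Lie algebra with fundamental form
`ω = g(·,Φ·)`, and `D` a derivation with `Dω = αω` (`α ≠ 0`), `Dη = 0`, `Dξ = 0`,
`DΦ = ΦD`. Then on `g = h ⋊_D ℝ`, the 2-form `Ω = ω + η ∧ θ` with `θ(X,a) = -αa`
satisfies `dΩ = θ ∧ Ω` and `dθ = 0`. -/
theorem stmt12 (H : Type*) [LieRing H] [LieAlgebra ℝ H]
    (gm : H →ₗ[ℝ] H →ₗ[ℝ] ℝ) (η : H →ₗ[ℝ] ℝ) (ξ : H) (Φ : H →ₗ[ℝ] H)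
    (D : H →ₗ[ℝ] H) (α : ℝ) (hα : α ≠ 0)
    (hgsym : ∀ x y : H, gm x y = gm y x)
    (hgpos : ∀ x : H, x ≠ 0 → 0 < gm x x)
    (hηξ : η ξ = 1)
    (hΦ2 : ∀ x : H, Φ (Φ x) = -x + η x • ξ)
    (hcomp : ∀ x y : H, gm (Φ x) (Φ y) = gm x y - η x * η y)
    (ω : H → H → ℝ) (hω : ∀ x y : H, ω x y = gm x (Φ y))
    (hdη : ∀ x y : H, η ⁅x, y⁆ = 0)
    (hdω : ∀ x y z : H, -ω ⁅x, y⁆ z + ω ⁅x, z⁆ y - ω ⁅y, z⁆ x = 0)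
    (hD : ∀ x y : H, D ⁅x, y⁆ = ⁅D x, y⁆ + ⁅x, D y⁆)
    (hDω : ∀ x y : H, ω (D x) y + ω x (D y) = α * ω x y)
    (hDη : ∀ x : H, η (D x) = 0) (hDξ : D ξ = 0)
    (hDΦ : ∀ x : H, D (Φ x) = Φ (D x))
    -- the semidirect product `h ⋊_D ℝ`, realized on `H × ℝ`:
    (br : H × ℝ → H × ℝ → H × ℝ)
    (hbr : ∀ u v : H × ℝ, br u v = (⁅u.1, v.1⁆ + u.2 • D v.1 - v.2 • D u.1, 0))
    (θ : H × ℝ → ℝ) (hθ : ∀ u : H × ℝ, θ u = -α * u.2)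
    (Ω : H × ℝ → H × ℝ → ℝ)
    (hΩ : ∀ u v : H × ℝ, Ω u v = ω u.1 v.1 + η u.1 * θ v - η v.1 * θ u) :
    (∀ u v : H × ℝ, θ (br u v) = 0) ∧
    (∀ u v w : H × ℝ, -Ω (br u v) w + Ω (br u w) v - Ω (br v w) u
        = θ u * Ω v w - θ v * Ω u w + θ w * Ω u v) :=
  stmt12_general H gm η ξ Φ D α hgsym hηξ hΦ2 hcomp ω hω hdη hdω hDω hDη br hbr θ hθ Ω hΩ
end

section
/- On the Oeljeklaus–Toma Lie algebra g_OT with complex structure J x_i = y_i, J z_1 = z_2, the forms θ = Σ_i x^i and Ω = 2Σ_i x^i∧y^i + Σ_{i≠j} x^i∧y^j + z^1∧z^2 satisfy dθ = 0 and dΩ = θ∧Ω. -/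
/-!
Both sides of `dθ = 0` and `dΩ = θ ∧ Ω` are multilinear, so it suffices to compare them on the
spanning family `x, y, z`, where everything is read off the bracket table. Every bracket of
generators lies in the span of the `y i` and `z k`, on which `θ` vanishes. For `dΩ`, on a triple
`(x i, z 0, z 1)` only the trace `-1` of `ad (x i)` on `span {z 0, z 1}` survives, matching
`θ (x i) * Ω (z 0) (z 1) = 1`; on a triple `(x i, x j, y k)` both sides equal `δⱼₖ - δᵢₖ`
because `Ω (x i) (y j) = 1 + δᵢⱼ`.
-/

open Submodule

namespace LinearMap

variable {R M N P Q ι κ τ : Type*} [CommSemiring R] [AddCommMonoid M] [AddCommMonoid N]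
  [AddCommMonoid P] [AddCommMonoid Q] [Module R M] [Module R N] [Module R P] [Module R Q]

theorem ext_on_range₂ {v : ι → M} {w : κ → N} {f g : M →ₗ[R] N →ₗ[R] P}
    (hv : span R (Set.range v) = ⊤) (hw : span R (Set.range w) = ⊤)
    (h : ∀ i j, f (v i) (w j) = g (v i) (w j)) : f = g :=
  ext_on_range hv fun i => ext_on_range hw (h i)

theorem ext_on_range₃ {v : ι → M} {w : κ → N} {t : τ → P} {f g : M →ₗ[R] N →ₗ[R] P →ₗ[R] Q}
    (hv : span R (Set.range v) = ⊤) (hw : span R (Set.range w) = ⊤)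
    (ht : span R (Set.range t) = ⊤)
    (h : ∀ i j k, f (v i) (w j) (t k) = g (v i) (w j) (t k)) : f = g :=
  ext_on_range hv fun i => ext_on_range₂ hw ht (h i)

end LinearMap

namespace LieAlgebra

variable {R L : Type*} [CommRing R] [LieRing L] [LieAlgebra R L]

variable (R) in
def ceDiff₁ (θ : L →ₗ[R] R) : L →ₗ[R] L →ₗ[R] R :=
  -((ad R L : L →ₗ[R] Module.End R L).compr₂ θ)

@[simp]
theorem ceDiff₁_apply (θ : L →ₗ[R] R) (u v : L) : ceDiff₁ R θ u v = -θ ⁅u, v⁆ := rfl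

def ceDiff₂ (Ω : L →ₗ[R] L →ₗ[R] R) : L →ₗ[R] L →ₗ[R] L →ₗ[R] R :=
  LinearMap.mk₂ R (fun u v => -Ω ⁅u, v⁆ + Ω.flip v ∘ₗ ad R L u - Ω.flip u ∘ₗ ad R L v)
    (fun _ _ _ => by ext; simp; ring) (fun _ _ _ => by ext; simp; ring)
    (fun _ _ _ => by ext; simp; ring) (fun _ _ _ => by ext; simp; ring)

@[simp]
theorem ceDiff₂_apply (Ω : L →ₗ[R] L →ₗ[R] R) (u v w : L) :
    ceDiff₂ Ω u v w = -Ω ⁅u, v⁆ w + Ω ⁅u, w⁆ v - Ω ⁅v, w⁆ u := rfl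

end LieAlgebra

section Wedge

variable {R M : Type*} [CommRing R] [AddCommGroup M] [Module R M]

def wedge₁₂ (θ : M →ₗ[R] R) (Ω : M →ₗ[R] M →ₗ[R] R) : M →ₗ[R] M →ₗ[R] M →ₗ[R] R :=
  LinearMap.mk₂ R (fun u v => θ u • Ω v - θ v • Ω u + Ω u v • θ)
    (fun _ _ _ => by ext; simp; ring) (fun _ _ _ => by ext; simp; ring)
    (fun _ _ _ => by ext; simp; ring) (fun _ _ _ => by ext; simp; ring)

@[simp]
theorem wedge₁₂_apply (θ : M →ₗ[R] R) (Ω : M →ₗ[R] M →ₗ[R] R) (u v w : M) :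
    wedge₁₂ θ Ω u v w = θ u * Ω v w - θ v * Ω u w + θ w * Ω u v := by
  simp only [wedge₁₂, LinearMap.mk₂_apply, LinearMap.add_apply, LinearMap.sub_apply,
    LinearMap.smul_apply, smul_eq_mul]
  ring

end Wedge

section OeljeklausToma

variable {n : ℕ} {L : Type*} [LieRing L] [LieAlgebra ℝ L]

structure OTRelations (c : Fin n → ℝ) (x y : Fin n → L) (z : Fin 2 → L) : Prop where
  lie_x_y : ∀ i j, ⁅x i, y j⁆ = if i = j then y i else 0
  lie_x_x : ∀ i j, ⁅x i, x j⁆ = 0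
  lie_y_y : ∀ i j, ⁅y i, y j⁆ = 0
  lie_y_z : ∀ i k, ⁅y i, z k⁆ = 0
  lie_x_z₀ : ∀ i, ⁅x i, z 0⁆ = -((1 / 2 : ℝ) • z 0) + c i • z 1
  lie_x_z₁ : ∀ i, ⁅x i, z 1⁆ = -(c i • z 0) - (1 / 2 : ℝ) • z 1
  lie_z₀_z₁ : ⁅z 0, z 1⁆ = 0

structure IsOTLeeForm (x y : Fin n → L) (z : Fin 2 → L) (θ : L →ₗ[ℝ] ℝ) : Prop where
  apply_x : ∀ i, θ (x i) = 1
  apply_y : ∀ i, θ (y i) = 0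
  apply_z : ∀ k, θ (z k) = 0

structure IsOTFundamentalForm (x y : Fin n → L) (z : Fin 2 → L) (Ω : L →ₗ[ℝ] L →ₗ[ℝ] ℝ) :
    Prop where
  antisymm : ∀ u v, Ω u v = -Ω v u
  apply_x_y : ∀ i j, Ω (x i) (y j) = if i = j then 2 else 1
  apply_x_x : ∀ i j, Ω (x i) (x j) = 0
  apply_y_y : ∀ i j, Ω (y i) (y j) = 0
  apply_x_z : ∀ i k, Ω (x i) (z k) = 0
  apply_y_z : ∀ i k, Ω (y i) (z k) = 0
  apply_z₀_z₁ : Ω (z 0) (z 1) = 1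

variable {c : Fin n → ℝ} {x y : Fin n → L} {z : Fin 2 → L}

namespace OTRelations

theorem lie_y_x (h : OTRelations c x y z) (i j : Fin n) :
    ⁅y i, x j⁆ = if i = j then -y i else 0 := by
  rw [← lie_skew, h.lie_x_y]
  by_cases hij : i = j <;> simp [hij, Ne.symm]

theorem lie_z₀_x (h : OTRelations c x y z) (i : Fin n) :
    ⁅z 0, x i⁆ = (1 / 2 : ℝ) • z 0 - c i • z 1 := by
  rw [← lie_skew, h.lie_x_z₀]; abel

theorem lie_z₁_x (h : OTRelations c x y z) (i : Fin n) :
    ⁅z 1, x i⁆ = c i • z 0 + (1 / 2 : ℝ) • z 1 := by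
  rw [← lie_skew, h.lie_x_z₁]; abel

theorem lie_z_y (h : OTRelations c x y z) (k : Fin 2) (i : Fin n) : ⁅z k, y i⁆ = 0 := by
  rw [← lie_skew, h.lie_y_z, neg_zero]

theorem lie_z₁_z₀ (h : OTRelations c x y z) : ⁅z 1, z 0⁆ = 0 := by
  rw [← lie_skew, h.lie_z₀_z₁, neg_zero]

end OTRelations

namespace IsOTFundamentalForm

variable {Ω : L →ₗ[ℝ] L →ₗ[ℝ] ℝ}

theorem apply_self (hΩ : IsOTFundamentalForm x y z Ω) (u : L) : Ω u u = 0 := by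
  linarith [hΩ.antisymm u u]

theorem apply_y_x (hΩ : IsOTFundamentalForm x y z Ω) (i j : Fin n) :
    Ω (y i) (x j) = if i = j then -2 else -1 := by
  rw [hΩ.antisymm, hΩ.apply_x_y]
  by_cases hij : i = j <;> simp [hij, Ne.symm]

theorem apply_z_x (hΩ : IsOTFundamentalForm x y z Ω) (k : Fin 2) (i : Fin n) :
    Ω (z k) (x i) = 0 := by
  rw [hΩ.antisymm, hΩ.apply_x_z, neg_zero]

theorem apply_z_y (hΩ : IsOTFundamentalForm x y z Ω) (k : Fin 2) (i : Fin n) :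
    Ω (z k) (y i) = 0 := by
  rw [hΩ.antisymm, hΩ.apply_y_z, neg_zero]

theorem apply_z₁_z₀ (hΩ : IsOTFundamentalForm x y z Ω) : Ω (z 1) (z 0) = -1 := by
  rw [hΩ.antisymm, hΩ.apply_z₀_z₁]

end IsOTFundamentalForm

namespace OTRelations

open LieAlgebra

theorem ceDiff₁_leeForm_eq_zero (h : OTRelations c x y z)
    (hspan : span ℝ (Set.range (Sum.elim x (Sum.elim y z))) = ⊤) {θ : L →ₗ[ℝ] ℝ}
    (hθ : IsOTLeeForm x y z θ) : ceDiff₁ ℝ θ = 0 := by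
  refine LinearMap.ext_on_range₂ hspan hspan fun a b => ?_
  rcases a with i | i | k <;> rcases b with j | j | l <;> (try fin_cases k) <;>
    (try fin_cases l) <;>
    simp [h.lie_x_y, h.lie_x_x, h.lie_y_y, h.lie_y_z, h.lie_x_z₀, h.lie_x_z₁, h.lie_z₀_z₁,
      h.lie_y_x, h.lie_z₀_x, h.lie_z₁_x, h.lie_z_y, h.lie_z₁_z₀, hθ.apply_y, hθ.apply_z,
      apply_ite θ]

theorem ceDiff₂_fundamentalForm_eq_wedge (h : OTRelations c x y z)
    (hspan : span ℝ (Set.range (Sum.elim x (Sum.elim y z))) = ⊤) {θ : L →ₗ[ℝ] ℝ}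
    (hθ : IsOTLeeForm x y z θ) {Ω : L →ₗ[ℝ] L →ₗ[ℝ] ℝ} (hΩ : IsOTFundamentalForm x y z Ω) :
    ceDiff₂ Ω = wedge₁₂ θ Ω := by
  refine LinearMap.ext_on_range₃ hspan hspan hspan fun a b d => ?_
  rcases a with i | i | k <;> rcases b with j | j | l <;> rcases d with m | m | p <;>
    (try fin_cases k) <;> (try fin_cases l) <;> (try fin_cases p) <;>
    simp [h.lie_x_y, h.lie_x_x, h.lie_y_y, h.lie_y_z, h.lie_x_z₀, h.lie_x_z₁, h.lie_z₀_z₁,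
      h.lie_y_x, h.lie_z₀_x, h.lie_z₁_x, h.lie_z_y, h.lie_z₁_z₀, hθ.apply_x, hθ.apply_y,
      hθ.apply_z, hΩ.apply_x_y, hΩ.apply_x_x, hΩ.apply_y_y, hΩ.apply_x_z, hΩ.apply_y_z,
      hΩ.apply_z₀_z₁, hΩ.apply_self, hΩ.apply_y_x, hΩ.apply_z_x, hΩ.apply_z_y,
      hΩ.apply_z₁_z₀, apply_ite Ω] <;>
    (try split_ifs) <;> subst_vars <;>
    norm_num [hΩ.apply_x_y, hΩ.apply_y_y, hΩ.apply_y_z, hΩ.apply_y_x] <;> grind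

end OTRelations

end OeljeklausToma

theorem stmt16_general (n : ℕ) (c : Fin n → ℝ)
    (L : Type*) [LieRing L] [LieAlgebra ℝ L]
    (x y : Fin n → L) (z : Fin 2 → L)
    (hspan : ⊤ ≤ Submodule.span ℝ (Set.range (Sum.elim x (Sum.elim y z))))
    (hxy : ∀ i j, ⁅x i, y j⁆ = if i = j then y i else 0)
    (hxx : ∀ i j, ⁅x i, x j⁆ = 0) (hyy : ∀ i j, ⁅y i, y j⁆ = 0)
    (hyz : ∀ i k, ⁅y i, z k⁆ = 0)
    (hxz1 : ∀ i, ⁅x i, z 0⁆ = -((1 / 2 : ℝ) • z 0) + c i • z 1)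
    (hxz2 : ∀ i, ⁅x i, z 1⁆ = -(c i • z 0) - (1 / 2 : ℝ) • z 1)
    (hzz : ⁅z 0, z 1⁆ = 0)
    (θ : L →ₗ[ℝ] ℝ)
    (hθx : ∀ i, θ (x i) = 1) (hθy : ∀ i, θ (y i) = 0) (hθz : ∀ k, θ (z k) = 0)
    (Ω : L →ₗ[ℝ] L →ₗ[ℝ] ℝ) (halt : ∀ u v : L, Ω u v = - Ω v u)
    (hΩxy : ∀ i j, Ω (x i) (y j) = if i = j then 2 else 1)
    (hΩxx : ∀ i j, Ω (x i) (x j) = 0) (hΩyy : ∀ i j, Ω (y i) (y j) = 0)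
    (hΩxz : ∀ i k, Ω (x i) (z k) = 0) (hΩyz : ∀ i k, Ω (y i) (z k) = 0)
    (hΩzz : Ω (z 0) (z 1) = 1) :
    (∀ u v : L, θ ⁅u, v⁆ = 0) ∧
    (∀ u v w : L, -Ω ⁅u, v⁆ w + Ω ⁅u, w⁆ v - Ω ⁅v, w⁆ u
        = θ u * Ω v w - θ v * Ω u w + θ w * Ω u v) := by
  have hgen := eq_top_iff.2 hspan
  have hL : OTRelations c x y z := ⟨hxy, hxx, hyy, hyz, hxz1, hxz2, hzz⟩
  have hθ : IsOTLeeForm x y z θ := ⟨hθx, hθy, hθz⟩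
  have hΩ : IsOTFundamentalForm x y z Ω := ⟨halt, hΩxy, hΩxx, hΩyy, hΩxz, hΩyz, hΩzz⟩
  have hdθ := hL.ceDiff₁_leeForm_eq_zero hgen hθ
  have hdΩ := hL.ceDiff₂_fundamentalForm_eq_wedge hgen hθ hΩ
  refine ⟨fun u v => ?_, fun u v w => ?_⟩
  · simpa using LinearMap.congr_fun₂ hdθ u v
  · simpa using congr($hdΩ u v w)

/-- On the Oeljeklaus–Toma Lie algebra `g_OT` the forms `θ = Σᵢ xⁱ` and
`Ω = 2Σᵢ xⁱ∧yⁱ + Σ_{i≠j} xⁱ∧yʲ + z¹∧z²` satisfy `dθ = 0` and `dΩ = θ ∧ Ω`. -/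
theorem stmt16 (n : ℕ) (c : Fin n → ℝ)
    (L : Type*) [LieRing L] [LieAlgebra ℝ L]
    (x y : Fin n → L) (z : Fin 2 → L)
    (hli : LinearIndependent ℝ (Sum.elim x (Sum.elim y z)))
    (hspan : ⊤ ≤ Submodule.span ℝ (Set.range (Sum.elim x (Sum.elim y z))))
    (hxy : ∀ i j, ⁅x i, y j⁆ = if i = j then y i else 0)
    (hxx : ∀ i j, ⁅x i, x j⁆ = 0) (hyy : ∀ i j, ⁅y i, y j⁆ = 0)
    (hyz : ∀ i k, ⁅y i, z k⁆ = 0)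
    (hxz1 : ∀ i, ⁅x i, z 0⁆ = -((1 / 2 : ℝ) • z 0) + c i • z 1)
    (hxz2 : ∀ i, ⁅x i, z 1⁆ = -(c i • z 0) - (1 / 2 : ℝ) • z 1)
    (hzz : ⁅z 0, z 1⁆ = 0)
    (θ : L →ₗ[ℝ] ℝ)
    (hθx : ∀ i, θ (x i) = 1) (hθy : ∀ i, θ (y i) = 0) (hθz : ∀ k, θ (z k) = 0)
    (Ω : L →ₗ[ℝ] L →ₗ[ℝ] ℝ) (halt : ∀ u v : L, Ω u v = - Ω v u)
    (hΩxy : ∀ i j, Ω (x i) (y j) = if i = j then 2 else 1)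
    (hΩxx : ∀ i j, Ω (x i) (x j) = 0) (hΩyy : ∀ i j, Ω (y i) (y j) = 0)
    (hΩxz : ∀ i k, Ω (x i) (z k) = 0) (hΩyz : ∀ i k, Ω (y i) (z k) = 0)
    (hΩzz : Ω (z 0) (z 1) = 1) :
    (∀ u v : L, θ ⁅u, v⁆ = 0) ∧
    (∀ u v w : L, -Ω ⁅u, v⁆ w + Ω ⁅u, w⁆ v - Ω ⁅v, w⁆ u
        = θ u * Ω v w - θ v * Ω u w + θ w * Ω u v) :=
  stmt16_general n c L x y z hspan hxy hxx hyy hyz hxz1 hxz2 hzz θ hθx hθy hθz Ω halt hΩxy hΩxx hΩyy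
    hΩxz hΩyz hΩzz
end
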